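/- arXiv:2410.03611 — 3 statements merged into one kernel-verified Lean document; each statement's English description precedes it below -/
import Mathlib

section
/- For all integers a, b, c: d(a,b) + d(a+b,c) = d(b,c) + d(a,b+c), where d(m,n) = 0 if mn ≥ 0 and d(m,n) = min(|m|,|n|) otherwise. -/
/-- `d(m,n)` is `0` if `mn ≥ 0` and `min(|m|,|n|)` otherwise. -/
def BFNd (m n : ℤ) : ℤ := if 0 ≤ m * n then 0 else min |m| |n|

lemma BFNd_aux (m n : ℤ) : (0 ≤ m * n) ↔ (0 ≤ m ∧ 0 ≤ n) ∨ (m ≤ 0 ∧ n ≤ 0) := by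
  constructor
  · intro h
    rcases le_or_gt 0 m with hm | hm
    · rcases le_or_gt 0 n with hn | hn
      · exact Or.inl ⟨hm, hn⟩
      · have : m = 0 := by nlinarith
        exact Or.inr ⟨le_of_eq this, le_of_lt hn⟩
    · rcases le_or_gt 0 n with hn | hn
      · have : n = 0 := by nlinarith
        exact Or.inr ⟨le_of_lt hm, le_of_eq this⟩
      · exact Or.inr ⟨le_of_lt hm, le_of_lt hn⟩
  · rintro (⟨h1, h2⟩ | ⟨h1, h2⟩)
    · exact mul_nonneg h1 h2
    · simpa using mul_nonneg (neg_nonneg.2 h1) (neg_nonneg.2 h2)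

set_option maxHeartbeats 2000000 in
/-- For all integers `a`, `b`, `c`:
`d(a,b) + d(a+b,c) = d(b,c) + d(a,b+c)`. -/
theorem stmt1 (a b c : ℤ) :
    BFNd a b + BFNd (a + b) c = BFNd b c + BFNd a (b + c) := by
  simp only [BFNd, BFNd_aux, Int.abs_eq_natAbs]
  split_ifs <;> omega
end

section
/- Let Λ be a finitely generated free abelian group, R = ℂ[h_1,…,h_n] a polynomial ring, and ρ_1,…,ρ_n : Λ → ℤ group homomorphisms. In the Laurent group algebra R[Λ] (with basis z^λ, λ ∈ Λ) localized at h_1⋯h_n, define Z^λ = z^λ · ∏_{i : ρ_i(λ)>0} h_i^{ρ_i(λ)}. Then for all λ, μ ∈ Λ: Z^λ · Z^μ = (∏_{i=1}^n h_i^{d(ρ_i(λ), ρ_i(μ))}) · Z^{λ+μ}, where d(m,n) = 0 if mn ≥ 0 and d(m,n) = min(|m|,|n|) otherwise. In particular, the R-submodule spanned by the Z^λ is a subring. -/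
open MvPolynomial

/-- The generator `Z^λ = z^λ · ∏_{i : ρ_i(λ)>0} h_i^{ρ_i(λ)}` of the abelian
BFN Coulomb branch algebra, as an element of the Laurent group algebra
`R[Λ]` with `R = ℂ[h_1,…,h_n]`. -/
noncomputable def BFNZ {n : ℕ} {Λ : Type*} [AddCommGroup Λ]
    (ρ : Fin n → (Λ →+ ℤ)) (lam : Λ) :
    AddMonoidAlgebra (MvPolynomial (Fin n) ℂ) Λ :=
  AddMonoidAlgebra.single lam (∏ i, (X i : MvPolynomial (Fin n) ℂ) ^ (ρ i lam).toNat)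

lemma BFNd_key (m k : ℤ) : m.toNat + k.toNat = (BFNd m k).toNat + (m + k).toNat := by
  unfold BFNd
  by_cases h : 0 ≤ m * k
  · rw [if_pos h]
    rw [mul_nonneg_iff] at h
    omega
  · rw [if_neg h]
    rw [not_le, mul_neg_iff] at h
    rw [Int.abs_eq_natAbs, Int.abs_eq_natAbs]
    omega

/-- Multiplication rule `Z^λ · Z^μ = (∏_i h_i^{d(ρ_i(λ),ρ_i(μ))}) · Z^{λ+μ}`
for the Coulomb branch generators; in particular the `R`-submodule spanned by
the `Z^λ` is closed under multiplication. -/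
theorem stmt2 (n : ℕ) (Λ : Type*) [AddCommGroup Λ]
    [Module.Free ℤ Λ] [Module.Finite ℤ Λ]
    (ρ : Fin n → (Λ →+ ℤ)) :
    (∀ lam mu : Λ,
      BFNZ ρ lam * BFNZ ρ mu =
        AddMonoidAlgebra.single (0 : Λ)
            (∏ i, (X i : MvPolynomial (Fin n) ℂ) ^ (BFNd (ρ i lam) (ρ i mu)).toNat) *
          BFNZ ρ (lam + mu)) ∧
    (∀ x ∈ Submodule.span (MvPolynomial (Fin n) ℂ) (Set.range (BFNZ ρ)),
      ∀ y ∈ Submodule.span (MvPolynomial (Fin n) ℂ) (Set.range (BFNZ ρ)),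
        x * y ∈ Submodule.span (MvPolynomial (Fin n) ℂ) (Set.range (BFNZ ρ))) := by
  have key : ∀ lam mu : Λ,
      BFNZ ρ lam * BFNZ ρ mu =
        AddMonoidAlgebra.single (0 : Λ)
            (∏ i, (X i : MvPolynomial (Fin n) ℂ) ^ (BFNd (ρ i lam) (ρ i mu)).toNat) *
          BFNZ ρ (lam + mu) := by
    intro lam mu
    unfold BFNZ
    rw [AddMonoidAlgebra.single_mul_single, AddMonoidAlgebra.single_mul_single, zero_add]
    congr 1
    rw [← Finset.prod_mul_distrib, ← Finset.prod_mul_distrib]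
    refine Finset.prod_congr rfl fun i _ => ?_
    rw [← pow_add, ← pow_add, map_add, BFNd_key]
  refine ⟨key, ?_⟩
  intro x hx y hy
  induction hx using Submodule.span_induction with
  | mem x hx =>
    induction hy using Submodule.span_induction with
    | mem y hy =>
      obtain ⟨lam, rfl⟩ := hx
      obtain ⟨mu, rfl⟩ := hy
      rw [key lam mu]
      have : (AddMonoidAlgebra.single (0 : Λ)
            (∏ i, (X i : MvPolynomial (Fin n) ℂ) ^ (BFNd (ρ i lam) (ρ i mu)).toNat)) *
          BFNZ ρ (lam + mu) =
          (∏ i, (X i : MvPolynomial (Fin n) ℂ) ^ (BFNd (ρ i lam) (ρ i mu)).toNat) •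
            BFNZ ρ (lam + mu) := by
        unfold BFNZ
        rw [AddMonoidAlgebra.single_mul_single, zero_add, AddMonoidAlgebra.smul_single']
      rw [this]
      exact Submodule.smul_mem _ _ (Submodule.subset_span ⟨lam + mu, rfl⟩)
    | zero => rw [mul_zero]; exact Submodule.zero_mem _
    | add y z _ _ hy hz => rw [mul_add]; exact Submodule.add_mem _ hy hz
    | smul c y _ hy => rw [mul_smul_comm]; exact Submodule.smul_mem _ _ hy
  | zero => rw [zero_mul]; exact Submodule.zero_mem _
  | add a b _ _ ha hb => rw [add_mul]; exact Submodule.add_mem _ ha hb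
  | smul c a _ ha => rw [smul_mul_assoc]; exact Submodule.smul_mem _ _ ha
end

section
/- Let d ≥ 1 and identify ℂ^d ≅ ℝ^{2d} with real coordinates x_1,…,x_d, y_1,…,y_d, complex structure J(∂/∂x_j) = ∂/∂y_j, and Ω = dz_1 ∧ ⋯ ∧ dz_d where z_j = x_j + i y_j. Let α = Σ_j (a_j dx_j + b_j dy_j) be a constant 1-form and u = Σ_j (p_j ∂/∂x_j + q_j ∂/∂y_j) a constant vector field, and let L = {y = 0} ⊂ ℝ^{2d}. Then the restrictions to L satisfy: α ∧ ι_u Im(Ω)|_L = (Σ_j a_j q_j) dx_1 ∧ ⋯ ∧ dx_d, and -α(Ju)·Re(Ω)|_L + (α∘J) ∧ ι_u Re(Ω)|_L = (Σ_j a_j q_j) dx_1 ∧ ⋯ ∧ dx_d; in particular these two d-forms on L are equal. -/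
open Finset

/-- The holomorphic volume form `Ω = dz_1 ∧ ⋯ ∧ dz_d` on `ℂ^d ≅ ℝ^{2d}`,
evaluated on `d` tangent vectors (each given by its `x`- and `y`-components):
`Ω(v_1,…,v_d) = det(dz_j(v_k)) = det((v_k)_x^j + i (v_k)_y^j)`. -/
noncomputable def Omega16 (d : ℕ)
    (v : Fin d → (Fin d → ℝ) × (Fin d → ℝ)) : ℂ :=
  Matrix.det (Matrix.of fun j k => ((v k).1 j : ℂ) + Complex.I * ((v k).2 j : ℂ))

-- key linear algebra identity (cofactor/Cramer style)
lemma key16 {n : ℕ} (q : Fin (n + 1) → ℝ) (v : Fin (n + 1) → Fin (n + 1) → ℝ)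
    (m : Fin (n + 1)) :
    ∑ j : Fin (n + 1), (-1 : ℝ) ^ (j : ℕ) * v j m *
      Matrix.det (Matrix.of fun r k => (Fin.cons q (fun i => v (Fin.succAbove j i)) : Fin (n+1) → Fin (n+1) → ℝ) k r) =
    q m * Matrix.det (Matrix.of fun r k => v k r) := by
  classical
  set w : Fin (n + 2) → Fin (n + 1) → ℝ := Fin.cons q v with hw
  set C : Matrix (Fin (n + 2)) (Fin (n + 2)) ℝ :=
    Matrix.of fun i => Fin.cons (w i m) (w i) with hC
  have hdet0 : C.det = 0 := by
    apply Matrix.det_zero_of_column_eq (i := 0) (j := m.succ) (Fin.succ_ne_zero m).symm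
    intro k
    simp [hC]
  rw [Matrix.det_succ_column_zero] at hdet0
  have hsub : ∀ i : Fin (n + 2),
      (C.submatrix i.succAbove Fin.succ) = Matrix.of fun r c => w (i.succAbove r) c := by
    intro i; ext r c; simp [hC]
  simp only [hsub] at hdet0
  rw [Fin.sum_univ_succ] at hdet0
  have h0 : (Matrix.of fun r c => w ((0 : Fin (n+2)).succAbove r) c)
      = Matrix.of fun r c => v r c := by
    ext r c; simp [hw]
  have hj : ∀ j : Fin (n + 1),
      (Matrix.of fun r c => w ((j.succ).succAbove r) c)
      = Matrix.of fun r c => (Fin.cons q (fun i => v (Fin.succAbove j i)) : Fin (n+1) → Fin (n+1) → ℝ) r c := by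
    intro j; ext r c
    refine Fin.cases ?_ (fun r' => ?_) r
    · simp [hw]
    · simp [hw, Fin.succ_succAbove_succ]
  simp only [h0, hj] at hdet0
  have hT1 : Matrix.det (Matrix.of fun r c => v r c)
      = Matrix.det (Matrix.of fun r k => v k r) := by
    rw [← Matrix.det_transpose]; congr 1
  have hT2 : ∀ j : Fin (n + 1),
      Matrix.det (Matrix.of fun r c => (Fin.cons q (fun i => v (Fin.succAbove j i)) : Fin (n+1) → Fin (n+1) → ℝ) r c)
      = Matrix.det (Matrix.of fun r k => (Fin.cons q (fun i => v (Fin.succAbove j i)) : Fin (n+1) → Fin (n+1) → ℝ) k r) := by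
    intro j; rw [← Matrix.det_transpose]; congr 1
  simp only [hT1, hT2, hw, Fin.cons_zero, Fin.cons_succ, Fin.val_succ, Fin.val_zero,
    pow_zero, pow_succ, one_mul] at hdet0
  simp only [hC, Matrix.of_apply, Fin.cons_zero, Fin.cons_succ, hw] at hdet0
  have hneg : ∑ j : Fin (n + 1), (-1 : ℝ) ^ (j : ℕ) * v j m *
      Matrix.det (Matrix.of fun r k => (Fin.cons q (fun i => v (Fin.succAbove j i)) : Fin (n+1) → Fin (n+1) → ℝ) k r)
      = -(∑ j : Fin (n + 1), (-1 : ℝ) ^ (j : ℕ) * -1 * v j m *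
      Matrix.det (Matrix.of fun r k => (Fin.cons q (fun i => v (Fin.succAbove j i)) : Fin (n+1) → Fin (n+1) → ℝ) k r)) := by
    rw [← Finset.sum_neg_distrib]
    exact Finset.sum_congr rfl fun j _ => by ring
  rw [hneg]
  linarith

lemma det_map_coe16 {n : ℕ} (M : Matrix (Fin n) (Fin n) ℝ) :
    (M.map Complex.ofRealHom).det = ((M.det : ℝ) : ℂ) := by
  rw [← RingHom.mapMatrix_apply, ← RingHom.map_det]; rfl

lemma omega_real16 {n : ℕ} (v : Fin n → Fin n → ℝ) :
    Omega16 n (fun k => (v k, 0)) = ((Matrix.of fun j k => v k j).det : ℂ) := by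
  unfold Omega16
  rw [← det_map_coe16]
  congr 1
  ext j k
  simp

lemma omega_cons16 {n : ℕ} (p q : Fin (n + 1) → ℝ) (v' : Fin n → Fin (n + 1) → ℝ) :
    Omega16 (n + 1) (Fin.cons (p, q) (fun k => (v' k, 0))) =
      ((Matrix.of fun j k => (Fin.cons p v' : Fin (n+1) → Fin (n+1) → ℝ) k j).det : ℂ) +
        Complex.I * ((Matrix.of fun j k => (Fin.cons q v' : Fin (n+1) → Fin (n+1) → ℝ) k j).det : ℂ) := by
  classical
  set A : Matrix (Fin (n+1)) (Fin (n+1)) ℂ :=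
    (Matrix.of fun j k => (Fin.cons p v' : Fin (n+1) → Fin (n+1) → ℝ) k j).map Complex.ofRealHom with hA
  have hM : (Matrix.of fun j k =>
      (((Fin.cons (p, q) (fun k => (v' k, 0)) : Fin (n+1) → (Fin (n+1) → ℝ) × (Fin (n+1) → ℝ)) k).1 j : ℂ) +
        Complex.I * (((Fin.cons (p, q) (fun k => (v' k, 0)) : Fin (n+1) → (Fin (n+1) → ℝ) × (Fin (n+1) → ℝ)) k).2 j : ℂ))
      = A.updateCol 0 ((fun j => A j 0) + Complex.I • (fun j => ((q j : ℝ) : ℂ))) := by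
    ext j k
    refine Fin.cases ?_ (fun k' => ?_) k
    · simp [hA, Matrix.updateCol_self]
    · simp [hA, Matrix.updateCol_ne (Fin.succ_ne_zero k')]
  unfold Omega16
  rw [hM, Matrix.det_updateCol_add, Matrix.updateCol_eq_self, Matrix.det_updateCol_smul]
  have h2 : A.updateCol 0 (fun j => ((q j : ℝ) : ℂ))
      = (Matrix.of fun j k => (Fin.cons q v' : Fin (n+1) → Fin (n+1) → ℝ) k j).map Complex.ofRealHom := by
    ext j k
    refine Fin.cases ?_ (fun k' => ?_) k
    · simp [hA, Matrix.updateCol_self]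
    · simp [hA, Matrix.updateCol_ne (Fin.succ_ne_zero k')]
  rw [h2, hA, det_map_coe16, det_map_coe16]

/-- Lemma `lemmavolform`: on `ℂ^{d+1} ≅ ℝ^{2(d+1)}` with constant 1-form
`α = Σ (a_j dx_j + b_j dy_j)`, constant vector field
`u = Σ (p_j ∂/∂x_j + q_j ∂/∂y_j)`, and `L = {y = 0}`, the restrictions satisfy
`α ∧ ι_u Im(Ω)|_L = (Σ a_j q_j) dx_1∧⋯∧dx_{d+1}` and
`-α(Ju)·Re(Ω)|_L + (α∘J) ∧ ι_u Re(Ω)|_L = (Σ a_j q_j) dx_1∧⋯∧dx_{d+1}`;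
in particular the two forms agree on `L`. Both identities are stated by
evaluation on arbitrary tuples of tangent vectors `(v_k, 0)` of `L`, using
`(α ∧ β)(w_0,…,w_d) = Σ_j (-1)^j α(w_j) β(w_0,…,ŵ_j,…,w_d)` and
`(ι_u Ω)(w_1,…,w_d) = Ω(u,w_1,…,w_d)`. -/
theorem stmt16 (d : ℕ) (a b p q : Fin (d + 1) → ℝ)
    (α : (Fin (d + 1) → ℝ) × (Fin (d + 1) → ℝ) → ℝ)
    (hα : ∀ w, α w = ∑ j, (a j * w.1 j + b j * w.2 j))
    (u : (Fin (d + 1) → ℝ) × (Fin (d + 1) → ℝ)) (hu : u = (p, q))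
    (J : (Fin (d + 1) → ℝ) × (Fin (d + 1) → ℝ) →
      (Fin (d + 1) → ℝ) × (Fin (d + 1) → ℝ))
    (hJ : ∀ w, J w = (-w.2, w.1))
    (v : Fin (d + 1) → (Fin (d + 1) → ℝ)) :
    ((∑ j : Fin (d + 1), (-1 : ℝ) ^ (j : ℕ) * α (v j, 0) *
        (Omega16 (d + 1)
          (Fin.cons u (fun k : Fin d => (v (Fin.succAbove j k), 0)))).im) =
      (∑ j, a j * q j) * Matrix.det (Matrix.of fun j k => v k j)) ∧
    ((-(α (J u)) * (Omega16 (d + 1) (fun k => (v k, 0))).re +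
        ∑ j : Fin (d + 1), (-1 : ℝ) ^ (j : ℕ) * α (J (v j, 0)) *
          (Omega16 (d + 1)
            (Fin.cons u (fun k : Fin d => (v (Fin.succAbove j k), 0)))).re) =
      (∑ j, a j * q j) * Matrix.det (Matrix.of fun j k => v k j)) := by
  classical
  subst hu
  have hΩ : ∀ j : Fin (d + 1),
      Omega16 (d + 1) (Fin.cons (p, q) (fun k : Fin d => (v (Fin.succAbove j k), 0)))
        = ((Matrix.of fun r k => (Fin.cons p (fun i => v (Fin.succAbove j i)) :
              Fin (d+1) → Fin (d+1) → ℝ) k r).det : ℂ)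
          + Complex.I * ((Matrix.of fun r k => (Fin.cons q (fun i => v (Fin.succAbove j i)) :
              Fin (d+1) → Fin (d+1) → ℝ) k r).det : ℂ) :=
    fun j => omega_cons16 p q fun k => v (Fin.succAbove j k)
  have him : ∀ j : Fin (d + 1),
      (Omega16 (d + 1) (Fin.cons (p, q) (fun k : Fin d => (v (Fin.succAbove j k), 0)))).im
        = (Matrix.of fun r k => (Fin.cons q (fun i => v (Fin.succAbove j i)) :
              Fin (d+1) → Fin (d+1) → ℝ) k r).det := by
    intro j; rw [hΩ j]; simp
  have hre : ∀ j : Fin (d + 1),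
      (Omega16 (d + 1) (Fin.cons (p, q) (fun k : Fin d => (v (Fin.succAbove j k), 0)))).re
        = (Matrix.of fun r k => (Fin.cons p (fun i => v (Fin.succAbove j i)) :
              Fin (d+1) → Fin (d+1) → ℝ) k r).det := by
    intro j; rw [hΩ j]; simp
  have hsum : ∀ (e c : Fin (d + 1) → ℝ),
      (∑ j : Fin (d + 1), (-1 : ℝ) ^ (j : ℕ) * (∑ m, e m * v j m) *
        (Matrix.of fun r k => (Fin.cons c (fun i => v (Fin.succAbove j i)) :
            Fin (d+1) → Fin (d+1) → ℝ) k r).det)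
      = (∑ m, e m * c m) * Matrix.det (Matrix.of fun r k => v k r) := by
    intro e c
    calc ∑ j : Fin (d + 1), (-1 : ℝ) ^ (j : ℕ) * (∑ m, e m * v j m) *
          (Matrix.of fun r k => (Fin.cons c (fun i => v (Fin.succAbove j i)) :
              Fin (d+1) → Fin (d+1) → ℝ) k r).det
        = ∑ j : Fin (d + 1), ∑ m : Fin (d + 1), e m * ((-1 : ℝ) ^ (j : ℕ) * v j m *
            (Matrix.of fun r k => (Fin.cons c (fun i => v (Fin.succAbove j i)) :
                Fin (d+1) → Fin (d+1) → ℝ) k r).det) := by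
          refine Finset.sum_congr rfl fun j _ => ?_
          rw [Finset.mul_sum, Finset.sum_mul]
          exact Finset.sum_congr rfl fun m _ => by ring
      _ = ∑ m : Fin (d + 1), e m * (c m * Matrix.det (Matrix.of fun r k => v k r)) := by
          rw [Finset.sum_comm]
          refine Finset.sum_congr rfl fun m _ => ?_
          rw [← Finset.mul_sum, key16 c v m]
      _ = (∑ m, e m * c m) * Matrix.det (Matrix.of fun r k => v k r) := by
          rw [Finset.sum_mul]
          exact Finset.sum_congr rfl fun m _ => by ring
  constructor
  · have h1 : ∀ j : Fin (d + 1), α (v j, 0) = ∑ m, a m * v j m := by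
      intro j; rw [hα]; simp
    calc ∑ j : Fin (d + 1), (-1 : ℝ) ^ (j : ℕ) * α (v j, 0) *
          (Omega16 (d + 1)
            (Fin.cons (p, q) (fun k : Fin d => (v (Fin.succAbove j k), 0)))).im
        = ∑ j : Fin (d + 1), (-1 : ℝ) ^ (j : ℕ) * (∑ m, a m * v j m) *
            (Matrix.of fun r k => (Fin.cons q (fun i => v (Fin.succAbove j i)) :
                Fin (d+1) → Fin (d+1) → ℝ) k r).det := by
          refine Finset.sum_congr rfl fun j _ => ?_
          rw [h1 j, him j]
      _ = (∑ m, a m * q m) * Matrix.det (Matrix.of fun r k => v k r) := hsum a q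
  · have h2 : ∀ j : Fin (d + 1), α (J (v j, 0)) = ∑ m, b m * v j m := by
      intro j; rw [hJ, hα]; simp
    have h3 : α (J (p, q)) = ∑ m, (a m * -q m + b m * p m) := by
      rw [hJ, hα]; simp
    have h4 : (Omega16 (d + 1) (fun k => (v k, 0))).re
        = Matrix.det (Matrix.of fun r k => v k r) := by
      rw [omega_real16]; simp
    have h5 : (∑ j : Fin (d + 1), (-1 : ℝ) ^ (j : ℕ) * α (J (v j, 0)) *
          (Omega16 (d + 1)
            (Fin.cons (p, q) (fun k : Fin d => (v (Fin.succAbove j k), 0)))).re)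
        = (∑ m, b m * p m) * Matrix.det (Matrix.of fun r k => v k r) := by
      calc ∑ j : Fin (d + 1), (-1 : ℝ) ^ (j : ℕ) * α (J (v j, 0)) *
            (Omega16 (d + 1)
              (Fin.cons (p, q) (fun k : Fin d => (v (Fin.succAbove j k), 0)))).re
          = ∑ j : Fin (d + 1), (-1 : ℝ) ^ (j : ℕ) * (∑ m, b m * v j m) *
              (Matrix.of fun r k => (Fin.cons p (fun i => v (Fin.succAbove j i)) :
                  Fin (d+1) → Fin (d+1) → ℝ) k r).det := by
            refine Finset.sum_congr rfl fun j _ => ?_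
            rw [h2 j, hre j]
        _ = (∑ m, b m * p m) * Matrix.det (Matrix.of fun r k => v k r) := hsum b p
    rw [h3, h4, h5]
    have e : ∑ m : Fin (d + 1), (a m * -q m + b m * p m)
        = -(∑ m, a m * q m) + ∑ m, b m * p m := by
      rw [Finset.sum_add_distrib]
      congr 1
      rw [← Finset.sum_neg_distrib]
      exact Finset.sum_congr rfl fun _ _ => by ring
    rw [e]; ring
end
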